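/- arXiv:1207.4449 — 5 statements merged into one kernel-verified Lean document; each statement's English description precedes it below -/
import Mathlib

section
/- For any ρ with 0 ≤ ρ < 1, the integral ∫₀¹ f(u,ρ,2) du = 1, where f(u,ρ,ν) = (ρ/(1-ρ))·(ρu/(1-ρ))^{ν-1}·(1-u)^{1/(1-ρ)} + (1 + ρu/(1-ρ))^ν·(1-u)^{1/(1-ρ)-1}. -/
open Real intervalIntegral

noncomputable def f (u ρ ν : ℝ) : ℝ :=
  (ρ / (1 - ρ)) * (ρ * u / (1 - ρ)) ^ (ν - 1) * (1 - u) ^ (1 / (1 - ρ)) +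
    (1 + ρ * u / (1 - ρ)) ^ ν * (1 - u) ^ (1 / (1 - ρ) - 1)

/-!
Writing `c = 1 / (1 - ρ)`, so that `ρ / (1 - ρ) = c - 1`, the integrand is
`c² (1 - u)^(c - 1) - (c² - 1) (1 - u)^c`, whose integral over `[0, 1]` is
`c² / c - (c² - 1) / (c + 1) = c - (c - 1) = 1`.
-/

lemma intervalIntegrable_one_sub_rpow {p : ℝ} (hp : -1 < p) :
    IntervalIntegrable (fun u : ℝ => (1 - u) ^ p) MeasureTheory.volume 0 1 := by
  simpa using ((intervalIntegrable_rpow' (a := 0) (b := 1) hp).comp_sub_left 1).symm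

lemma integral_one_sub_rpow {p : ℝ} (hp : -1 < p) :
    ∫ u in (0:ℝ)..1, (1 - u) ^ p = 1 / (p + 1) := by
  have hsub := integral_comp_sub_left (fun x : ℝ => x ^ p) 1 (a := 0) (b := 1)
  simp only [sub_zero, sub_self] at hsub
  rw [hsub, integral_symm, integral_rpow (Or.inl hp), one_rpow, zero_rpow (by linarith)]
  ring

lemma integral_sq_mul_one_sub_rpow_sub_eq_one {c : ℝ} (hc : 0 < c) :
    ∫ u in (0:ℝ)..1, (c ^ 2 * (1 - u) ^ (c - 1) - (c ^ 2 - 1) * (1 - u) ^ c) = 1 := by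
  have hc' : -1 < c - 1 := by linarith
  rw [integral_sub ((intervalIntegrable_one_sub_rpow hc').const_mul _)
      ((intervalIntegrable_one_sub_rpow (by linarith)).const_mul _),
    integral_const_mul, integral_const_mul, integral_one_sub_rpow hc',
    integral_one_sub_rpow (by linarith), sub_add_cancel]
  field_simp
  ring

lemma f_two_eq {ρ u : ℝ} (hρ : ρ ≠ 1) (hu : u ≤ 1) :
    f u ρ 2 = (1 / (1 - ρ)) ^ 2 * (1 - u) ^ (1 / (1 - ρ) - 1)
      - ((1 / (1 - ρ)) ^ 2 - 1) * (1 - u) ^ (1 / (1 - ρ)) := by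
  have hρ' : 1 - ρ ≠ 0 := sub_ne_zero.2 hρ.symm
  have hpow : (1 - u) ^ (1 / (1 - ρ)) = (1 - u) ^ (1 / (1 - ρ) - 1) * (1 - u) := by
    conv_lhs => rw [← sub_add_cancel (1 / (1 - ρ)) 1]
    rw [rpow_add' (by linarith) (by simpa using hρ'), rpow_one]
  rw [f, hpow, show (2:ℝ) - 1 = 1 by norm_num, rpow_one, rpow_two]
  field_simp
  ring

theorem stmt_1_general (ρ : ℝ) (h1 : ρ < 1) :
    ∫ u in (0:ℝ)..1, f u ρ 2 = 1 := by
  rw [integral_congr fun u hu => f_two_eq h1.ne (by simpa using hu.2)]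
  exact integral_sq_mul_one_sub_rpow_sub_eq_one (one_div_pos.2 (sub_pos.2 h1))

theorem stmt_1 (ρ : ℝ) (h0 : 0 ≤ ρ) (h1 : ρ < 1) :
    ∫ u in (0:ℝ)..1, f u ρ 2 = 1 :=
  stmt_1_general ρ h1
end

section
/- If a nonnegative random variable B satisfies the dominated-variation condition inf_{x ≥ 0} P(B > 2x)/P(B > x) > 0 and has finite mean β > 0, then its integrated tail distribution B^{fw}, with P(B^{fw} > x) = (1/β)∫_x^∞ P(B > u) du, also satisfies inf_{x ≥ 0} P(B^{fw} > 2x)/P(B^{fw} > x) > 0. -/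
/-!
Write `F x = ∫_{(x,∞)} P(B > u) du`, and let `c ≤ P(B > 2y) / P(B > y)` for all `y ≥ 0`.
As the tail is antitone, `F x - F (2x) = ∫_{(x,2x]} P(B > u) du ≤ x P(B > x)`, while
`F (2x) ≥ ∫_{(2x,4x]} P(B > u) du ≥ 2x P(B > 4x) ≥ 2c² x P(B > x)`.
Hence `F x ≤ (1 + 1 / (2c²)) F (2x)`, i.e. `F (2x) / F x ≥ 2c² / (1 + 2c²)`.
That `F` is finite is the layer-cake formula `E[B] = ∫_{(0,∞)} P(B > u) du`.
-/

open MeasureTheory Set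

def HasDominatedVariation (f : ℝ → ℝ) : Prop :=
  ∃ c > 0, ∀ x ≥ 0, c ≤ f (2 * x) / f x

namespace HasDominatedVariation

variable {f : ℝ → ℝ}

theorem pos (h : HasDominatedVariation f) (hf0 : ∀ u, 0 ≤ f u) {x : ℝ} (hx : 0 ≤ x) :
    0 < f x := by
  obtain ⟨c, hc, hD⟩ := h
  refine (hf0 x).lt_of_ne fun h0 => ?_
  have := hc.trans_le (hD x hx)
  simp [← h0] at this

theorem const_mul (h : HasDominatedVariation f) {k : ℝ} (hk : k ≠ 0) :
    HasDominatedVariation fun x => k * f x := by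
  obtain ⟨c, hc, hD⟩ := h
  exact ⟨c, hc, fun x hx => by simpa only [mul_div_mul_left _ _ hk] using hD x hx⟩

end HasDominatedVariation

namespace Antitone

variable {f : ℝ → ℝ} {a b : ℝ}

theorem integral_Ioc_le (hf : Antitone f) (hab : a ≤ b) :
    ∫ u in Ioc a b, f u ≤ (b - a) * f a :=
  calc ∫ u in Ioc a b, f u ≤ ∫ _ in Ioc a b, f a :=
        setIntegral_mono_on hf.intervalIntegrable.1 (integrableOn_const measure_Ioc_lt_top.ne)
          measurableSet_Ioc fun _ hu => hf hu.1.le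
    _ = (b - a) * f a := by rw [setIntegral_const, Real.volume_real_Ioc_of_le hab, smul_eq_mul]

theorem mul_le_integral_Ioc (hf : Antitone f) (hab : a ≤ b) :
    (b - a) * f b ≤ ∫ u in Ioc a b, f u :=
  calc (b - a) * f b = ∫ _ in Ioc a b, f b := by
        rw [setIntegral_const, Real.volume_real_Ioc_of_le hab, smul_eq_mul]
    _ ≤ ∫ u in Ioc a b, f u :=
        setIntegral_mono_on (integrableOn_const measure_Ioc_lt_top.ne) hf.intervalIntegrable.1
          measurableSet_Ioc fun _ hu => hf hu.2

theorem mul_le_integral_Ioi (hf : Antitone f) (hf0 : ∀ u, 0 ≤ f u)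
    (hint : IntegrableOn f (Ioi a)) (hab : a ≤ b) :
    (b - a) * f b ≤ ∫ u in Ioi a, f u :=
  (hf.mul_le_integral_Ioc hab).trans <|
    setIntegral_mono_set hint (ae_of_all _ hf0) Ioc_subset_Ioi_self.eventuallyLE

theorem hasDominatedVariation_integral_Ioi (hf : Antitone f) (hf0 : ∀ u, 0 ≤ f u)
    (hint : IntegrableOn f (Ioi 0)) (hD : HasDominatedVariation f) :
    HasDominatedVariation fun x => ∫ u in Ioi x, f u := by
  have ⟨c, hc, hDc⟩ := hD
  have hdouble : ∀ x ≥ 0, c * f x ≤ f (2 * x) := fun x hx =>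
    (le_div_iff₀ (hD.pos hf0 hx)).mp (hDc x hx)
  have hintOn : ∀ x ≥ 0, IntegrableOn f (Ioi x) := fun x hx =>
    hint.mono_set (Ioi_subset_Ioi hx)
  refine ⟨2 * c ^ 2 / (1 + 2 * c ^ 2), by positivity, fun x hx => ?_⟩
  have h2x : 0 ≤ 2 * x := by linarith
  set A := ∫ u in Ioc x (2 * x), f u
  set F₂ := ∫ u in Ioi (2 * x), f u
  have hsplit : ∫ u in Ioi x, f u = A + F₂ := by
    rw [← setIntegral_union (Ioc_disjoint_Ioi le_rfl) measurableSet_Ioi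
      ((hintOn x hx).mono_set Ioc_subset_Ioi_self) (hintOn x hx |>.mono_set
        (Ioi_subset_Ioi (by linarith))), Ioc_union_Ioi_eq_Ioi (by linarith)]
  have hA : A ≤ x * f x :=
    calc A ≤ (2 * x - x) * f x := hf.integral_Ioc_le (by linarith)
      _ = x * f x := by ring
  have hF₂ : 2 * x * f (2 * (2 * x)) ≤ F₂ :=
    calc 2 * x * f (2 * (2 * x)) = (2 * (2 * x) - 2 * x) * f (2 * (2 * x)) := by ring
      _ ≤ F₂ := hf.mul_le_integral_Ioi hf0 (hintOn _ h2x) (by linarith)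
  have hF₂_pos : 0 < F₂ := by
    have h := hf.mul_le_integral_Ioi hf0 (hintOn _ h2x) (le_add_of_nonneg_right zero_le_one)
    rw [add_sub_cancel_left, one_mul] at h
    exact (hD.pos hf0 (by linarith)).trans_le h
  have hquad : c ^ 2 * f x ≤ f (2 * (2 * x)) := by
    nlinarith [hdouble x hx, hdouble _ h2x]
  have hA_le_F₂ : 2 * c ^ 2 * A ≤ F₂ := by
    nlinarith [hf0 x]
  have hA0 : 0 ≤ A := setIntegral_nonneg measurableSet_Ioc fun u _ => hf0 u
  change _ ≤ F₂ / ∫ u in Ioi x, f u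
  rw [hsplit, div_le_div_iff₀ (by positivity) (by positivity)]
  nlinarith

end Antitone

section Tail

variable {Ω : Type*} [MeasurableSpace Ω] (μ : Measure Ω) [IsFiniteMeasure μ] {B : Ω → ℝ}

theorem antitone_measureReal_lt (B : Ω → ℝ) : Antitone fun x => μ.real {ω | x < B ω} :=
  fun _ _ hxy => measureReal_mono fun _ h => hxy.trans_lt h

theorem integrableOn_measureReal_lt (hB : Integrable B μ) (hB0 : 0 ≤ᵐ[μ] B) :
    IntegrableOn (fun x => μ.real {ω | x < B ω}) (Ioi 0) := by
  refine ⟨(antitone_measureReal_lt μ B).measurable.aestronglyMeasurable, ?_⟩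
  rw [hasFiniteIntegral_iff_ofReal (ae_of_all _ fun _ => measureReal_nonneg)]
  calc ∫⁻ x in Ioi 0, ENNReal.ofReal (μ.real {ω | x < B ω})
      ≤ ∫⁻ x in Ioi 0, μ {ω | x < B ω} := lintegral_mono fun _ => ENNReal.ofReal_toReal_le
    _ = ∫⁻ ω, ENNReal.ofReal (B ω) ∂μ :=
        (lintegral_eq_lintegral_meas_lt μ hB0 hB.aemeasurable).symm
    _ < ⊤ := hB.lintegral_lt_top

end Tail

theorem stmt_6_general {Ω : Type*} [MeasurableSpace Ω] (μ : Measure Ω) [IsProbabilityMeasure μ]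
    (B : Ω → ℝ) (hBnn : ∀ ω, 0 ≤ B ω) (hBint : Integrable B μ)
    (β : ℝ) (hβpos : 0 < β)
    (tail : ℝ → ℝ) (htail : ∀ x, tail x = (μ {ω | B ω > x}).toReal)
    (hD : ∃ c > 0, ∀ x ≥ 0, c ≤ tail (2 * x) / tail x)
    (tailfw : ℝ → ℝ)
    (htailfw : ∀ x, tailfw x = (1 / β) * ∫ u in Set.Ioi x, tail u) :
    ∃ c > 0, ∀ x ≥ 0, c ≤ tailfw (2 * x) / tailfw x := by
  obtain rfl : tail = fun x => μ.real {ω | x < B ω} := funext htail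
  obtain rfl : tailfw = fun x => (1 / β) * ∫ u in Set.Ioi x, μ.real {ω | u < B ω} :=
    funext htailfw
  exact ((antitone_measureReal_lt μ B).hasDominatedVariation_integral_Ioi
    (fun _ => measureReal_nonneg) (integrableOn_measureReal_lt μ hBint (ae_of_all _ hBnn))
    hD).const_mul (one_div_ne_zero hβpos.ne')

theorem stmt_6 {Ω : Type*} [MeasurableSpace Ω] (μ : Measure Ω) [IsProbabilityMeasure μ]
    (B : Ω → ℝ) (hBnn : ∀ ω, 0 ≤ B ω) (hBint : Integrable B μ)
    (β : ℝ) (hβ : β = ∫ ω, B ω ∂μ) (hβpos : 0 < β)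
    (tail : ℝ → ℝ) (htail : ∀ x, tail x = (μ {ω | B ω > x}).toReal)
    (hpos : ∀ x, 0 < tail x)
    (hD : ∃ c > 0, ∀ x ≥ 0, c ≤ tail (2 * x) / tail x)
    (tailfw : ℝ → ℝ)
    (htailfw : ∀ x, tailfw x = (1 / β) * ∫ u in Set.Ioi x, tail u) :
    ∃ c > 0, ∀ x ≥ 0, c ≤ tailfw (2 * x) / tailfw x :=
  stmt_6_general μ B hBnn hBint β hβpos tail htail hD tailfw htailfw
end

section
/- Let F be a distribution function in class D (inf_x (1-F(2x))/(1-F(x)) > 0) which has an eventually non-increasing density f. Then F is intermediate regularly varying: lim_{ζ ↓ 1} liminf_{x→∞} (1-F(ζx))/(1-F(x)) = 1. -/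
/-!
For `x` large, monotonicity of the density gives `(x/2) f(x) ≤ ∫_{x/2}^x f ≤ 1 - F(x/2)`, and
class D gives `c (1 - F(x/2)) ≤ 1 - F(x)`, so `c x f(x) ≤ 2 (1 - F(x))`. Using monotonicity once
more, `F(ζx) - F(x) ≤ (ζ - 1) x f(x)`, hence
`1 - (2/c)(ζ - 1) ≤ (1 - F(ζx)) / (1 - F(x)) ≤ 1`, and the liminf is squeezed to `1` as
`ζ ↓ 1`.
-/

open Filter MeasureTheory Set Topology

theorem tendsto_liminf_nhdsGT_one_of_bounds {g : ℝ → ℝ → ℝ} (K : ℝ)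
    (h : ∀ ζ > 1, ∀ᶠ x in atTop, 1 - K * (ζ - 1) ≤ g ζ x ∧ g ζ x ≤ 1) :
    Tendsto (fun ζ => liminf (g ζ) atTop) (𝓝[>] 1) (𝓝 1) := by
  have hlower : Tendsto (fun ζ : ℝ => 1 - K * (ζ - 1)) (𝓝[>] 1) (𝓝 1) :=
    ((continuous_const.sub (continuous_const.mul (continuous_id.sub continuous_const))).tendsto'
      1 1 (by simp)).mono_left nhdsWithin_le_nhds
  refine tendsto_of_tendsto_of_tendsto_of_le_of_le' hlower tendsto_const_nhds ?_ ?_ <;>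
    filter_upwards [self_mem_nhdsWithin] with ζ hζ
  · have hle : ∀ᶠ x in atTop, g ζ x ≤ 1 := (h ζ hζ).mono fun _ hx => hx.2
    exact le_liminf_of_le (isCoboundedUnder_ge_of_eventually_le atTop hle)
      ((h ζ hζ).mono fun _ hx => hx.1)
  · exact liminf_le_of_frequently_le ((h ζ hζ).mono fun _ hx => hx.2).frequently
      ⟨_, (h ζ hζ).mono fun _ hx => hx.1⟩

theorem AntitoneOn.mul_le_intervalIntegral {f : ℝ → ℝ} {a b : ℝ} (hab : a ≤ b)
    (hf : AntitoneOn f (Icc a b)) : (b - a) * f b ≤ ∫ t in a..b, f t := by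
  have hi : IntervalIntegrable f volume a b := (uIcc_of_le hab ▸ hf).intervalIntegrable
  calc (b - a) * f b = ∫ _ in a..b, f b := by simp
    _ ≤ ∫ t in a..b, f t := intervalIntegral.integral_mono_on hab intervalIntegrable_const hi
        fun t ht => hf ht (right_mem_Icc.2 hab) ht.2

theorem AntitoneOn.intervalIntegral_le_mul {f : ℝ → ℝ} {a b : ℝ} (hab : a ≤ b)
    (hf : AntitoneOn f (Icc a b)) : ∫ t in a..b, f t ≤ (b - a) * f a := by
  have hi : IntervalIntegrable f volume a b := (uIcc_of_le hab ▸ hf).intervalIntegrable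
  calc ∫ t in a..b, f t ≤ ∫ _ in a..b, f a := intervalIntegral.integral_mono_on hab hi
        intervalIntegrable_const fun t ht => hf (left_mem_Icc.2 hab) ht ht.1
    _ = (b - a) * f a := by simp

section IntegrableDensity

variable {F f : ℝ → ℝ}

theorem sub_eq_intervalIntegral_of_eq_integral_Iic (hdens : ∀ x, F x = ∫ t in Iic x, f t)
    (hint : ∀ x, IntegrableOn f (Iic x)) (a b : ℝ) :
    F b - F a = ∫ t in a..b, f t := by
  rw [hdens, hdens, intervalIntegral.integral_Iic_sub_Iic (hint a) (hint b)]

theorem monotone_of_eq_integral_Iic (hdens : ∀ x, F x = ∫ t in Iic x, f t)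
    (hint : ∀ x, IntegrableOn f (Iic x)) (hfnn : ∀ x, 0 ≤ f x) : Monotone F :=
  fun a b hab => by
  have := intervalIntegral.integral_nonneg (μ := volume) hab fun t _ => hfnn t
  linarith [sub_eq_intervalIntegral_of_eq_integral_Iic hdens hint a b]

theorem mul_mul_le_two_mul_one_sub_of_classD (hdens : ∀ x, F x = ∫ t in Iic x, f t)
    (hint : ∀ x, IntegrableOn f (Iic x)) (hpos : ∀ x, 0 < 1 - F x) {x₀ : ℝ}
    (hf : AntitoneOn f (Ici x₀)) {c : ℝ} (hc : 0 ≤ c)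
    (hD : ∀ x ≥ 0, c ≤ (1 - F (2 * x)) / (1 - F x)) {x : ℝ} (hx : 0 ≤ x)
    (hxx₀ : 2 * x₀ ≤ x) :
    c * (x * f x) ≤ 2 * (1 - F x) := by
  have hhalf : x / 2 * f x ≤ F x - F (x / 2) := by
    rw [sub_eq_intervalIntegral_of_eq_integral_Iic hdens hint]
    have hanti : AntitoneOn f (Icc (x / 2) x) :=
      hf.mono (Icc_subset_Ici_self.trans (Ici_subset_Ici.2 (by linarith)))
    convert hanti.mul_le_intervalIntegral (by linarith) using 1
    ring
  have hclassD : c * (1 - F (x / 2)) ≤ 1 - F x := by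
    have := hD (x / 2) (by linarith)
    rw [mul_div_cancel₀ x two_ne_zero, le_div_iff₀ (hpos _)] at this
    linarith
  have hFx : F x ≤ 1 := by linarith [hpos x]
  calc c * (x * f x) = 2 * c * (x / 2 * f x) := by ring
    _ ≤ 2 * c * (F x - F (x / 2)) := by gcongr
    _ ≤ 2 * (c * (1 - F (x / 2))) := by nlinarith
    _ ≤ 2 * (1 - F x) := by gcongr

theorem eventually_tail_ratio_mem_of_classD (hdens : ∀ x, F x = ∫ t in Iic x, f t)
    (hint : ∀ x, IntegrableOn f (Iic x)) (hfnn : ∀ x, 0 ≤ f x) (hpos : ∀ x, 0 < 1 - F x)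
    {x₀ : ℝ} (hf : AntitoneOn f (Ici x₀)) {c : ℝ} (hc : 0 < c)
    (hD : ∀ x ≥ 0, c ≤ (1 - F (2 * x)) / (1 - F x)) (ζ : ℝ) (hζ : 1 ≤ ζ) :
    ∀ᶠ x in atTop, 1 - 2 / c * (ζ - 1) ≤ (1 - F (ζ * x)) / (1 - F x) ∧
      (1 - F (ζ * x)) / (1 - F x) ≤ 1 := by
  filter_upwards [eventually_ge_atTop (max (2 * x₀) (max x₀ 0))] with x hx
  simp only [max_le_iff] at hx
  obtain ⟨hxx₀, hx₀x, hx0⟩ := hx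
  have hxζx : x ≤ ζ * x := le_mul_of_one_le_left hx0 hζ
  have hincr : F (ζ * x) - F x ≤ (ζ - 1) * (x * f x) := by
    rw [sub_eq_intervalIntegral_of_eq_integral_Iic hdens hint]
    have hanti : AntitoneOn f (Icc x (ζ * x)) :=
      hf.mono (Icc_subset_Ici_self.trans (Ici_subset_Ici.2 hx₀x))
    convert hanti.intervalIntegral_le_mul hxζx using 1
    ring
  have hdensity := mul_mul_le_two_mul_one_sub_of_classD hdens hint hpos hf hc.le hD hx0 hxx₀
  have hmono := monotone_of_eq_integral_Iic hdens hint hfnn hxζx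
  have hζ1 : 0 ≤ ζ - 1 := sub_nonneg.2 hζ
  have hincr_tail : (ζ - 1) * (x * f x) ≤ 2 / c * (ζ - 1) * (1 - F x) :=
    calc (ζ - 1) * (x * f x) = (ζ - 1) * (c * (x * f x)) / c := by field_simp
      _ ≤ (ζ - 1) * (2 * (1 - F x)) / c := by gcongr
      _ = 2 / c * (ζ - 1) * (1 - F x) := by ring
  rw [le_div_iff₀ (hpos x), div_le_one (hpos x)]
  constructor <;> linarith

end IntegrableDensity

theorem eq_zero_of_not_integrableOn_Iic {F f : ℝ → ℝ}
    (hdens : ∀ x, F x = ∫ t in Iic x, f t) {b : ℝ} (hb : ¬ IntegrableOn f (Iic b)) {x : ℝ}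
    (hx : b ≤ x) : F x = 0 := by
  rw [hdens]
  exact integral_undef fun h => hb (IntegrableOn.mono_set h (Iic_subset_Iic.2 hx))

theorem stmt_7 (F f : ℝ → ℝ)
    (hfnn : ∀ x, 0 ≤ f x)
    (hdens : ∀ x, F x = ∫ t in Set.Iic x, f t)
    (hpos : ∀ x, 0 < 1 - F x)
    (hmono : ∃ x₀ : ℝ, AntitoneOn f (Set.Ici x₀))
    (hD : ∃ c > 0, ∀ x ≥ 0, c ≤ (1 - F (2 * x)) / (1 - F x)) :
    Tendsto (fun ζ : ℝ => Filter.liminf (fun x => (1 - F (ζ * x)) / (1 - F x)) atTop)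
      (nhdsWithin 1 (Set.Ioi 1)) (nhds 1) := by
  obtain ⟨x₀, hf⟩ := hmono
  obtain ⟨c, hc, hD⟩ := hD
  by_cases hint : ∀ x, IntegrableOn f (Iic x)
  · exact tendsto_liminf_nhdsGT_one_of_bounds (2 / c) fun ζ hζ =>
      eventually_tail_ratio_mem_of_classD hdens hint hfnn hpos hf hc hD ζ hζ.le
  · -- `F` is then eventually `0`, a junk value of the Bochner integral
    obtain ⟨b, hb⟩ := not_forall.1 hint
    refine tendsto_liminf_nhdsGT_one_of_bounds 0 fun ζ hζ => ?_
    filter_upwards [eventually_ge_atTop (max b 0)] with x hx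
    rw [max_le_iff] at hx
    rw [eq_zero_of_not_integrableOn_Iic hdens hb hx.1,
      eq_zero_of_not_integrableOn_Iic hdens hb (hx.1.trans (le_mul_of_one_le_left hx.2 hζ.le))]
    norm_num
end

section
/- Fix 0 ≤ ρ < 1 and let y ∈ (0,1). Then as u → ∞ (u real), the product ∏_{i=1}^{⌊n(u)⌋} (1 - 1/(q(1+ε) - i(1-ρ-ε))) with n(u) = (u/β)(1-ε) - R, u = (βq/(1-ρ))·y, satisfies: for each fixed ε ∈ (0, small) and R > 0, the product converges, as q → ∞, to (1 - y·((1-ε)(1-ρ-ε))/((1+ε)(1-ρ)))^{1/(1-ρ-ε)}·(1+o(1)). -/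
/-!
With `a = 1 + ε`, `b = 1 - ρ - ε` and `c = y(1 - ε)/(1 - ρ)` the product is
`∏_{i ≤ N(q)} (1 - 1/(q a - i b))` with `N(q)/q → c`. From `log x ≤ x - 1` and `1 - 1/x ≤ log x`,
the logarithm of the `i`-th factor lies between consecutive increments of `t ↦ log (z - t b)/b`,
with `z = q a` above and `z = q a - 1 - b` below. Both telescoped bounds
`(log (z - N b) - log z)/b` tend to `log (1 - b c/a)/b`, the value of `-∫₀^c dv/(a - b v)`,
and exponentiating gives `(1 - b c/a)^(1/b)`.
-/

open Real Filter Topology Finset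

lemma sum_Icc_one_sub_pred (g : ℝ → ℝ) (N : ℕ) :
    ∑ i ∈ Icc 1 N, (g i - g (i - 1)) = g N - g 0 := by
  induction N with
  | zero => simp
  | succ N ih =>
    rw [sum_Icc_succ_top (by omega), ih]
    push_cast
    rw [add_sub_cancel_right]
    ring

lemma log_one_sub_inv_le {b m : ℝ} (hb : 0 < b) (hm : 1 < m) :
    log (1 - 1 / m) ≤ (log m - log (m + b)) / b := by
  have hm0 : 0 < m := by linarith
  have h_log : log (1 - 1 / m) ≤ -(1 / m) := by
    have := log_le_sub_one_of_pos (x := 1 - 1 / m) (by rw [sub_pos, div_lt_one hm0]; exact hm)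
    linarith
  have h_ratio : log ((m + b) / m) ≤ b / m := by
    have := log_le_sub_one_of_pos (x := (m + b) / m) (by positivity)
    rwa [show (m + b) / m - 1 = b / m by field_simp; ring] at this
  rw [log_div (by positivity) hm0.ne'] at h_ratio
  rw [le_div_iff₀ hb]
  nlinarith [show b / m = 1 / m * b by ring]

lemma le_log_one_sub_inv {b m : ℝ} (hb : 0 < b) (hm : 1 + b < m) :
    (log (m - 1 - b) - log (m - 1)) / b ≤ log (1 - 1 / m) := by
  have hm1 : 0 < m - 1 := by linarith
  have hm0 : 0 < m := by linarith
  have h_log : -(1 / (m - 1)) ≤ log (1 - 1 / m) := by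
    have := one_sub_inv_le_log_of_pos (x := (m - 1) / m) (div_pos hm1 hm0)
    rwa [inv_div, show 1 - m / (m - 1) = -(1 / (m - 1)) by field_simp; ring,
      show (m - 1) / m = 1 - 1 / m by field_simp] at this
  have h_ratio : b / (m - 1) ≤ log ((m - 1) / (m - 1 - b)) := by
    have := one_sub_inv_le_log_of_pos (x := (m - 1) / (m - 1 - b)) (div_pos hm1 (by linarith))
    rwa [inv_div, show 1 - (m - 1 - b) / (m - 1) = b / (m - 1) by field_simp; ring] at this
  rw [log_div hm1.ne' (by linarith)] at h_ratio
  rw [div_le_iff₀ hb]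
  nlinarith [show b / (m - 1) = 1 / (m - 1) * b by ring]

lemma sum_log_one_sub_inv_le {x b : ℝ} {N : ℕ} (hb : 0 < b) (hx : 1 + N * b < x) :
    ∑ i ∈ Icc 1 N, log (1 - 1 / (x - i * b)) ≤ (log (x - N * b) - log x) / b := by
  have h := sum_Icc_one_sub_pred (fun t => log (x - t * b) / b) N
  simp only [zero_mul, sub_zero] at h
  rw [sub_div, ← h]
  refine sum_le_sum fun i hi => ?_
  have hiN : (i : ℝ) ≤ N := by exact_mod_cast (mem_Icc.1 hi).2
  have e : x - i * b + b = x - (i - 1) * b := by ring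
  rw [← sub_div, ← e]
  exact log_one_sub_inv_le hb (by nlinarith)

lemma le_sum_log_one_sub_inv {x b : ℝ} {N : ℕ} (hb : 0 < b) (hx : 1 + b + N * b < x) :
    (log (x - (1 + b) - N * b) - log (x - (1 + b))) / b ≤
      ∑ i ∈ Icc 1 N, log (1 - 1 / (x - i * b)) := by
  have h := sum_Icc_one_sub_pred (fun t => log (x - (1 + b) - t * b) / b) N
  simp only [zero_mul, sub_zero] at h
  rw [sub_div, ← h]
  refine sum_le_sum fun i hi => ?_
  have hiN : (i : ℝ) ≤ N := by exact_mod_cast (mem_Icc.1 hi).2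
  have e1 : x - (1 + b) - i * b = x - i * b - 1 - b := by ring
  have e2 : x - (1 + b) - (i - 1) * b = x - i * b - 1 := by ring
  rw [← sub_div, e1, e2]
  exact le_log_one_sub_inv hb (by nlinarith)

lemma tendsto_mul_sub_div_atTop (a k : ℝ) :
    Tendsto (fun q : ℝ => (q * a - k) / q) atTop (𝓝 a) := by
  have h : Tendsto (fun q : ℝ => a - k / q) atTop (𝓝 (a - 0)) :=
    tendsto_const_nhds.sub (tendsto_const_nhds.div_atTop tendsto_id)
  rw [sub_zero] at h
  refine h.congr' ?_
  filter_upwards [eventually_ne_atTop 0] with q hq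
  field_simp

lemma tendsto_natFloor_mul_sub_div_atTop {c : ℝ} (hc : 0 < c) (R : ℝ) :
    Tendsto (fun q : ℝ => (⌊q * c - R⌋₊ : ℝ) / q) atTop (𝓝 c) := by
  have h_lin : Tendsto (fun q : ℝ => q * c - R) atTop atTop :=
    tendsto_atTop_add_const_right _ _ (tendsto_id.atTop_mul_const hc)
  have h := (tendsto_nat_floor_div_atTop.comp h_lin).mul (tendsto_mul_sub_div_atTop c R)
  rw [one_mul] at h
  refine h.congr' ?_
  filter_upwards [h_lin.eventually_ne_atTop 0] with q hq
  exact div_mul_div_cancel₀ hq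

lemma tendsto_log_sub_log_of_div {f g : ℝ → ℝ} {a d : ℝ}
    (hf : Tendsto (fun q => f q / q) atTop (𝓝 a)) (hg : Tendsto (fun q => g q / q) atTop (𝓝 d))
    (ha : a ≠ 0) (hd : d ≠ 0) :
    Tendsto (fun q => log (f q) - log (g q)) atTop (𝓝 (log a - log d)) := by
  refine (((continuousAt_log ha).tendsto.comp hf).sub
    ((continuousAt_log hd).tendsto.comp hg)).congr' ?_
  filter_upwards [hf.eventually_ne ha, hg.eventually_ne hd, eventually_ne_atTop 0]
    with q hfq hgq hq
  simp only [Function.comp_apply]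
  rw [log_div (div_ne_zero_iff.1 hfq).1 hq, log_div (div_ne_zero_iff.1 hgq).1 hq]
  ring

theorem tendsto_prod_one_sub_inv_mul_sub {a b c : ℝ} {N : ℝ → ℕ} (ha : 0 < a) (hb : 0 < b)
    (hbc : b * c < a) (hN : Tendsto (fun q => (N q : ℝ) / q) atTop (𝓝 c)) :
    Tendsto (fun q => ∏ i ∈ Icc 1 (N q), (1 - 1 / (q * a - i * b))) atTop
      (𝓝 ((1 - b * c / a) ^ (1 / b))) := by
  have h_div (k : ℝ) : Tendsto (fun q : ℝ => (q * a - k - N q * b) / q) atTop (𝓝 (a - b * c)) := by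
    have := (tendsto_mul_sub_div_atTop a k).sub (hN.mul_const b)
    simp only [mul_comm c b] at this
    refine this.congr fun q => ?_
    ring
  have h_bound (k : ℝ) : Tendsto (fun q : ℝ => (log (q * a - k - N q * b) - log (q * a - k)) / b)
      atTop (𝓝 ((log (a - b * c) - log a) / b)) :=
    (tendsto_log_sub_log_of_div (h_div k) (tendsto_mul_sub_div_atTop a k)
      (by linarith) ha.ne').div_const b
  have h_large : ∀ᶠ q : ℝ in atTop, 1 + b + N q * b < q * a := by
    filter_upwards [(h_div (1 + b)).eventually_const_lt (by linarith : (0 : ℝ) < a - b * c),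
      eventually_gt_atTop 0] with q hq hq0
    have := (div_pos_iff_of_pos_right hq0).1 hq
    linarith
  have h_sum : Tendsto (fun q => ∑ i ∈ Icc 1 (N q), log (1 - 1 / (q * a - i * b))) atTop
      (𝓝 ((log (a - b * c) - log a) / b)) := by
    refine tendsto_of_tendsto_of_tendsto_of_le_of_le' (h_bound (1 + b))
      (by simpa only [sub_zero] using h_bound 0) ?_ ?_
    · filter_upwards [h_large] with q hq using le_sum_log_one_sub_inv hb hq
    · filter_upwards [h_large] with q hq using sum_log_one_sub_inv_le hb (by linarith)
  have h_limit : exp ((log (a - b * c) - log a) / b) = (1 - b * c / a) ^ (1 / b) := by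
    rw [rpow_def_of_pos (by rw [sub_pos, div_lt_one ha]; exact hbc), ← log_div (by linarith) ha.ne',
      sub_div, div_self ha.ne']
    ring_nf
  rw [← h_limit]
  refine ((continuous_exp.tendsto _).comp h_sum).congr' ?_
  filter_upwards [h_large] with q hq
  rw [Function.comp_apply, exp_sum]
  refine prod_congr rfl fun i hi => exp_log ?_
  have hiN : (i : ℝ) ≤ N q := by exact_mod_cast (mem_Icc.1 hi).2
  rw [sub_pos, div_lt_one (by nlinarith)]
  nlinarith

theorem stmt_18_general (ρ y β ε R : ℝ) (h0 : 0 ≤ ρ) (h1 : ρ < 1)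
    (hy0 : 0 < y) (hy1 : y < 1) (hβ : 0 < β)
    (hε0 : 0 < ε) (hε : ε < 1 - ρ) :
    Tendsto (fun q : ℝ =>
        ∏ i ∈ Finset.Icc 1 ⌊(β * q * y / (1 - ρ) / β) * (1 - ε) - R⌋₊,
          (1 - 1 / (q * (1 + ε) - (i : ℝ) * (1 - ρ - ε))))
      atTop
      (nhds ((1 - y * ((1 - ε) * (1 - ρ - ε)) / ((1 + ε) * (1 - ρ))) ^ (1 / (1 - ρ - ε)))) := by
  have hρ : 0 < 1 - ρ := by linarith
  set c := y * (1 - ε) / (1 - ρ) with hc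
  have hc0 : 0 < c := div_pos (mul_pos hy0 (by linarith)) hρ
  have h_floor (q : ℝ) : β * q * y / (1 - ρ) / β * (1 - ε) - R = q * c - R := by
    rw [hc]
    field_simp
  have h_base : y * ((1 - ε) * (1 - ρ - ε)) / ((1 + ε) * (1 - ρ)) = (1 - ρ - ε) * c / (1 + ε) := by
    rw [hc]
    field_simp
  have hbc : (1 - ρ - ε) * c < 1 + ε := by
    have : (1 - ρ - ε) * c < y * (1 - ε) := by
      rw [hc, mul_div_left_comm, ← mul_div_assoc, div_lt_iff₀ hρ]
      nlinarith [mul_pos hy0 (show 0 < 1 - ε by linarith)]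
    nlinarith
  simp only [h_floor, h_base]
  exact tendsto_prod_one_sub_inv_mul_sub (by linarith) (by linarith) hbc
    (tendsto_natFloor_mul_sub_div_atTop hc0 R)

theorem stmt_18 (ρ y β ε R : ℝ) (h0 : 0 ≤ ρ) (h1 : ρ < 1)
    (hy0 : 0 < y) (hy1 : y < 1) (hβ : 0 < β) (hR : 0 < R)
    (hε0 : 0 < ε) (hε : ε < 1 - ρ) :
    Tendsto (fun q : ℝ =>
        ∏ i ∈ Finset.Icc 1 ⌊(β * q * y / (1 - ρ) / β) * (1 - ε) - R⌋₊,
          (1 - 1 / (q * (1 + ε) - (i : ℝ) * (1 - ρ - ε))))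
      atTop
      (nhds ((1 - y * ((1 - ε) * (1 - ρ - ε)) / ((1 + ε) * (1 - ρ))) ^ (1 / (1 - ρ - ε)))) :=
  stmt_18_general ρ y β ε R h0 h1 hy0 hy1 hβ hε0 hε
end

section
/- Let B be a nonnegative random variable with P(B > x) > 0 for all x, belonging to L ∩ D (long-tailed and dominated variation), with finite mean β. Let B₁, B₂ be i.i.d. copies of B and fix α > 0, ρ ∈ (0,1). Then ∑_{m₁=1}^∞ ∑_{m₂=1}^∞ P(B₁ > (x+m₁α)(1-ρ))·P(B₂ > (x+m₂α)(1-ρ)) = o(P(B^{fw} > x)) as x → ∞, where P(B^{fw}>x) = (1/β)∫_x^∞ P(B>u) du. -/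
/-!
Dominated variation of the tail `F̄(x) = P(B > x)` propagates from the scale `2` to every scale:
`F̄(θ y) ≤ K F̄(y)` for `y ≥ 0`. Comparing with an integral, the single sum
`S(x) = ∑ₘ F̄((x + mα)(1 - ρ))` is therefore `O(∫ₓ^∞ F̄)`. The double sum is `S(x)²`, and since
`∫ₓ^∞ F̄ → 0` (as `E B < ∞`), `S(x)² = o(∫ₓ^∞ F̄)`.
-/

open Filter MeasureTheory Set Asymptotics

theorem Antitone.sum_range_le_integral_Ioi {f : ℝ → ℝ} (hf : Antitone f) (hf0 : ∀ t, 0 ≤ f t)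
    {a : ℝ} (hfi : IntegrableOn f (Ioi a)) {h : ℝ} (hh : 0 < h) (N : ℕ) :
    ∑ n ∈ Finset.range N, f (a + (n + 1) * h) ≤ (∫ t in Ioi a, f t) / h := by
  have hg : AntitoneOn (fun t => f (a + h * t)) (Icc 0 (0 + N)) :=
    fun s _ t _ hst => hf (by gcongr)
  calc ∑ n ∈ Finset.range N, f (a + (n + 1) * h)
      = ∑ n ∈ Finset.range N, f (a + h * (0 + ((n + 1 : ℕ) : ℝ))) := by
        push_cast; simp only [zero_add, mul_comm]
    _ ≤ ∫ t in (0 : ℝ)..0 + N, f (a + h * t) := hg.sum_le_integral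
    _ = (∫ t in a..a + h * N, f t) / h := by
        rw [intervalIntegral.integral_comp_add_mul _ hh.ne', smul_eq_mul, inv_mul_eq_div]
        simp
    _ ≤ (∫ t in Ioi a, f t) / h := by
        gcongr
        rw [intervalIntegral.integral_of_le (le_add_of_nonneg_right (by positivity))]
        exact setIntegral_mono_set hfi (.of_forall hf0) Ioc_subset_Ioi_self.eventuallyLE

theorem Antitone.exists_pos_le_mul_of_doubling {f : ℝ → ℝ} (hf : Antitone f) {c : ℝ} (hc : 0 < c)
    (hD : ∀ x ≥ 0, c * f x ≤ f (2 * x)) {θ : ℝ} (hθ : 0 < θ) :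
    ∃ K > 0, ∀ x ≥ 0, f (x * θ) ≤ K * f x := by
  obtain ⟨k, hk⟩ := exists_pow_lt_of_lt_one hθ (by norm_num : (1 / 2 : ℝ) < 1)
  have hiter : ∀ n : ℕ, ∀ x ≥ 0, c ^ n * f x ≤ f (2 ^ n * x) := by
    intro n
    induction n with
    | zero => simp
    | succ n ih =>
      intro x hx
      calc c ^ (n + 1) * f x = c * (c ^ n * f x) := by ring
        _ ≤ c * f (2 ^ n * x) := by gcongr; exact ih x hx
        _ ≤ f (2 * (2 ^ n * x)) := hD _ (by positivity)
        _ = f (2 ^ (n + 1) * x) := by ring_nf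
  refine ⟨(c ^ k)⁻¹, by positivity, fun x hx => ?_⟩
  rw [le_inv_mul_iff₀ (by positivity)]
  calc c ^ k * f (x * θ) ≤ c ^ k * f (x * (1 / 2) ^ k) := by gcongr; exact hf (by gcongr)
    _ ≤ f (2 ^ k * (x * (1 / 2) ^ k)) := hiter k _ (by positivity)
    _ = f x := by rw [one_div, inv_pow, mul_left_comm, mul_inv_cancel₀ (by positivity), mul_one]

theorem integrableOn_Ioi_measureReal_lt {Ω : Type*} [MeasurableSpace Ω] {μ : Measure Ω}
    {X : Ω → ℝ} (hX : Integrable X μ) (hX0 : 0 ≤ᵐ[μ] X) :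
    IntegrableOn (fun t => μ.real {ω | t < X ω}) (Ioi 0) := by
  have hmeas : Measurable fun t : ℝ => μ {ω | t < X ω} :=
    Antitone.measurable fun s t hst => measure_mono fun ω h => hst.trans_lt h
  refine ⟨hmeas.ennreal_toReal.aestronglyMeasurable, ?_⟩
  rw [hasFiniteIntegral_iff_ofReal (.of_forall fun t => measureReal_nonneg)]
  calc ∫⁻ t in Ioi 0, ENNReal.ofReal (μ.real {ω | t < X ω})
      ≤ ∫⁻ t in Ioi 0, μ {ω | t < X ω} := lintegral_mono fun t => ENNReal.ofReal_toReal_le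
    _ = ∫⁻ ω, ENNReal.ofReal (X ω) ∂μ := (lintegral_eq_lintegral_meas_lt μ hX0 hX.aemeasurable).symm
    _ < ⊤ := hX.lintegral_lt_top

theorem Antitone.isBigO_tsum_integral_Ioi {f : ℝ → ℝ} (hf : Antitone f) (hf0 : ∀ t, 0 ≤ f t)
    (hfi : IntegrableOn f (Ioi 0)) {c : ℝ} (hc : 0 < c) (hD : ∀ x ≥ 0, c * f x ≤ f (2 * x))
    {α θ : ℝ} (hα : 0 < α) (hθ : 0 < θ) :
    (fun x => ∑' m : ℕ, f ((x + (m + 1) * α) * θ)) =O[atTop] fun x => ∫ t in Ioi x, f t := by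
  obtain ⟨K, hK, hfK⟩ := hf.exists_pos_le_mul_of_doubling hc hD hθ
  refine IsBigO.of_bound (K / α) ?_
  filter_upwards [eventually_ge_atTop 0] with x hx
  rw [Real.norm_of_nonneg (tsum_nonneg fun m => hf0 _),
    Real.norm_of_nonneg (setIntegral_nonneg measurableSet_Ioi fun t _ => hf0 t)]
  refine Real.tsum_le_of_sum_range_le (fun m => hf0 _) fun N => ?_
  calc ∑ m ∈ Finset.range N, f ((x + (m + 1) * α) * θ)
      ≤ ∑ m ∈ Finset.range N, K * f (x + (m + 1) * α) :=
        Finset.sum_le_sum fun m _ => hfK _ (by positivity)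
    _ = K * ∑ m ∈ Finset.range N, f (x + (m + 1) * α) := (Finset.mul_sum ..).symm
    _ ≤ K * ((∫ t in Ioi x, f t) / α) := by
        gcongr
        exact hf.sum_range_le_integral_Ioi hf0 (hfi.mono_set (Ioi_subset_Ioi hx)) hα N
    _ = K / α * ∫ t in Ioi x, f t := by ring

theorem stmt_19_general {Ω : Type*} [MeasurableSpace Ω] (μ : Measure Ω) [IsProbabilityMeasure μ]
    (B : Ω → ℝ) (hBnn : ∀ ω, 0 ≤ B ω) (hBint : Integrable B μ)
    (β : ℝ)
    (tail : ℝ → ℝ) (htail : ∀ x, tail x = (μ {ω | B ω > x}).toReal)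
    (hpos : ∀ x, 0 < tail x)
    (hD : ∃ c > 0, ∀ x ≥ 0, c ≤ tail (2 * x) / tail x)
    (α ρ : ℝ) (hα : 0 < α) (hρ1 : ρ < 1)
    (tailfw : ℝ → ℝ)
    (htailfw : ∀ x, tailfw x = (1 / β) * ∫ u in Set.Ioi x, tail u) :
    Tendsto (fun x =>
        (∑' m₁ : ℕ, ∑' m₂ : ℕ,
            tail ((x + ((m₁ : ℝ) + 1) * α) * (1 - ρ)) *
              tail ((x + ((m₂ : ℝ) + 1) * α) * (1 - ρ))) / tailfw x)
      atTop (nhds 0) := by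
  obtain ⟨c, hc, hDc⟩ := hD
  have htail_anti : Antitone tail := fun s t hst => by
    simp only [htail]
    exact measureReal_mono fun ω h => hst.trans_lt h
  have htail_int : IntegrableOn tail (Ioi 0) := by
    rw [funext htail]
    exact integrableOn_Ioi_measureReal_lt hBint (.of_forall hBnn)
  have hdoubling : ∀ x ≥ 0, c * tail x ≤ tail (2 * x) := fun x hx =>
    (le_div_iff₀ (hpos x)).1 (hDc x hx)
  set S := fun x => ∑' m : ℕ, tail ((x + ((m : ℝ) + 1) * α) * (1 - ρ))
  set I := fun x => ∫ u in Ioi x, tail u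
  have hSI : S =O[atTop] I := htail_anti.isBigO_tsum_integral_Ioi (fun t => (hpos t).le) htail_int
    hc hdoubling hα (sub_pos.2 hρ1)
  have hSS : (fun x => S x * S x) =o[atTop] I := by
    simpa using hSI.mul_isLittleO ((isLittleO_one_iff ℝ).2 (hSI.trans_tendsto
      (tendsto_integral_Ioi_zero tendsto_id)))
  have hratio : ∀ x, (∑' m₁ : ℕ, ∑' m₂ : ℕ, tail ((x + ((m₁ : ℝ) + 1) * α) * (1 - ρ)) *
      tail ((x + ((m₂ : ℝ) + 1) * α) * (1 - ρ))) / tailfw x = β * (S x * S x / I x) := by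
    intro x
    simp only [htailfw, tsum_mul_left, tsum_mul_right, S, I]
    simp only [div_eq_mul_inv, mul_inv, inv_inv, one_mul]
    ring
  simp_rw [hratio]
  simpa using hSS.tendsto_div_nhds_zero.const_mul β

theorem stmt_19 {Ω : Type*} [MeasurableSpace Ω] (μ : Measure Ω) [IsProbabilityMeasure μ]
    (B : Ω → ℝ) (hBnn : ∀ ω, 0 ≤ B ω) (hBint : Integrable B μ)
    (β : ℝ) (hβ : β = ∫ ω, B ω ∂μ) (hβpos : 0 < β)
    (tail : ℝ → ℝ) (htail : ∀ x, tail x = (μ {ω | B ω > x}).toReal)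
    (hpos : ∀ x, 0 < tail x)
    (hlong : ∀ y > 0, Tendsto (fun x => tail (x + y) / tail x) atTop (nhds 1))
    (hD : ∃ c > 0, ∀ x ≥ 0, c ≤ tail (2 * x) / tail x)
    (α ρ : ℝ) (hα : 0 < α) (hρ0 : 0 < ρ) (hρ1 : ρ < 1)
    (tailfw : ℝ → ℝ)
    (htailfw : ∀ x, tailfw x = (1 / β) * ∫ u in Set.Ioi x, tail u) :
    Tendsto (fun x =>
        (∑' m₁ : ℕ, ∑' m₂ : ℕ,
            tail ((x + ((m₁ : ℝ) + 1) * α) * (1 - ρ)) *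
              tail ((x + ((m₂ : ℝ) + 1) * α) * (1 - ρ))) / tailfw x)
      atTop (nhds 0) :=
  stmt_19_general μ B hBnn hBint β tail htail hpos hD α ρ hα hρ1 tailfw htailfw
end
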